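/- Let 𝒩 be a connected plane Euclidean network and let p, q ∈ 𝒩_ℓ be diametral points (d(p,q) = diam(𝒩_ℓ)). If p lies on a pendant edge uv with u pendant, then p = u or p = v; that is, no point in the relative interior of a pendant edge belongs to a diametral pair. -/

import Mathlib

/-! Let `p` lie strictly inside the pendant edge `uv`. Either `q` lies on `[u, p]`, and then
`d(p, q) ≤ |p - q| < |u - v| ≤ d(u, v)`; or every path from `u` to `q` in the locus runs through
`p`, because removing `p` cuts `[u, p)` off the rest of the locus, and then
`d(u, q) ≥ |u - p| + d(p, q) > d(p, q)`. The last inequality needs `d(p, q) < ∞`: in a connected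
network the points at finite intrinsic distance from a given point form a union of edges that is
closed and has closed complement, hence is everything. -/

open Set
open scoped ENNReal

noncomputable section

attribute [local instance] Classical.propDecidable

/-- Points of the Euclidean plane. -/
abbrev Pt : Type := EuclideanSpace ℝ (Fin 2)

/-- Intrinsic (geodesic) distance inside a set `X ⊆ ℝ²`: the infimum of the lengths
(total variations) of continuous paths from `p` to `q` whose image lies in `X`. -/
def idist (X : Set Pt) (p q : Pt) : ℝ≥0∞ :=
  ⨅ (γ : ℝ → Pt) (_ : ContinuousOn γ (Set.Icc 0 1)) (_ : γ '' Set.Icc 0 1 ⊆ X)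
    (_ : γ 0 = p) (_ : γ 1 = q), eVariationOn γ (Set.Icc 0 1)

/-- Eccentricity of a point within `X`. -/
def ecc (X : Set Pt) (p : Pt) : ℝ≥0∞ := ⨆ q ∈ X, idist X p q

/-- Intrinsic diameter of `X`. -/
def idiam (X : Set Pt) : ℝ≥0∞ := ⨆ p ∈ X, ecc X p

/-- A plane Euclidean network: a finite set of vertices in the plane together with a
finite set of straight-line edges (recorded as ordered pairs of distinct vertices, each
edge recorded exactly once), such that two distinct edges meet only in common endpoints. -/
structure PlaneNetwork where
  V : Finset Pt
  Edg : Finset (Pt × Pt)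
  ends_mem : ∀ e ∈ Edg, e.1 ∈ V ∧ e.2 ∈ V
  ends_ne : ∀ e ∈ Edg, e.1 ≠ e.2
  no_swap : ∀ e ∈ Edg, (e.2, e.1) ∉ Edg
  vertex_cover : ∀ v ∈ V, ∃ e ∈ Edg, v = e.1 ∨ v = e.2
  plane : ∀ e ∈ Edg, ∀ f ∈ Edg, e ≠ f →
    segment ℝ e.1 e.2 ∩ segment ℝ f.1 f.2 ⊆ ({e.1, e.2} ∩ {f.1, f.2} : Set Pt)

namespace PlaneNetwork

/-- The locus of a network: the union of all its (closed) edges. -/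
def locus (N : PlaneNetwork) : Set Pt := ⋃ e ∈ N.Edg, segment ℝ e.1 e.2

/-- A network is connected when its locus is path-connected. -/
def Connected (N : PlaneNetwork) : Prop := IsPathConnected N.locus

/-- `u` and `v` are joined by an edge of the network. -/
def IsEdge (N : PlaneNetwork) (u v : Pt) : Prop := (u, v) ∈ N.Edg ∨ (v, u) ∈ N.Edg

/-- A vertex is pendant if it is an endpoint of exactly one edge. -/
def IsPendantVertex (N : PlaneNetwork) (v : Pt) : Prop :=
  v ∈ N.V ∧ (N.Edg.filter (fun e => e.1 = v ∨ e.2 = v)).card = 1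

/-- The number of pendant vertices of a network. -/
def pendantCount (N : PlaneNetwork) : ℕ := (N.V.filter fun v => N.IsPendantVertex v).card

end PlaneNetwork

/-- The union of a set with all the segments in a list. -/
def insertSegs (X : Set Pt) (L : List (Pt × Pt)) : Set Pt :=
  X ∪ ⋃ s ∈ L, segment ℝ s.1 s.2

/-- The segments of the list are inserted iteratively: the endpoints of the first one lie
on `X`, and the endpoints of each subsequent segment lie on the union of `X` with the
previously inserted segments. -/
def ValidSegs (X : Set Pt) : List (Pt × Pt) → Prop
  | [] => True
  | s :: rest => s.1 ∈ X ∧ s.2 ∈ X ∧ ValidSegs (X ∪ segment ℝ s.1 s.2) rest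

/-- A shortcut set for `X`: a finite sequence of iteratively inserted segments whose
insertion strictly decreases the intrinsic diameter. -/
def IsShortcutSet (X : Set Pt) (L : List (Pt × Pt)) : Prop :=
  ValidSegs X L ∧ idiam (insertSegs X L) < idiam X

/-- `X` admits a shortcut set. -/
def HasShortcutSet (X : Set Pt) : Prop := ∃ L, IsShortcutSet X L

/-- The shortcut number: the minimum size of a shortcut set. -/
def scn (X : Set Pt) : ℕ :=
  sInf {k | ∃ L : List (Pt × Pt), L.length = k ∧ IsShortcutSet X L}

section IntrinsicDistance

variable {X : Set Pt}

lemma le_idist {r : ℝ≥0∞} {p q : Pt}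
    (h : ∀ γ : ℝ → Pt, ContinuousOn γ (Icc 0 1) → γ '' Icc 0 1 ⊆ X → γ 0 = p → γ 1 = q →
      r ≤ eVariationOn γ (Icc 0 1)) :
    r ≤ idist X p q :=
  le_iInf fun γ => le_iInf fun hγ => le_iInf fun hX => le_iInf fun h0 => le_iInf fun h1 =>
    h γ hγ hX h0 h1

lemma idist_le_eVariationOn {a b : ℝ} (hab : a ≤ b) {γ : ℝ → Pt}
    (hγ : ContinuousOn γ (Icc a b)) (hX : γ '' Icc a b ⊆ X) :
    idist X (γ a) (γ b) ≤ eVariationOn γ (Icc a b) := by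
  set φ : ℝ → ℝ := ⇑(AffineMap.lineMap (k := ℝ) a b)
  have hφ : φ '' Icc 0 1 = Icc a b := by
    rw [← segment_eq_image_lineMap, segment_eq_Icc hab]
  have hφc : Continuous φ := (lipschitzWith_lineMap a b).continuous
  have hφm : MonotoneOn φ (Icc 0 1) := (AffineMap.lineMap_mono hab).monotoneOn _
  refine iInf_le_of_le (γ ∘ φ) ?_
  rw [iInf_pos (hγ.comp hφc.continuousOn (hφ ▸ mapsTo_image φ _)),
    iInf_pos (by rwa [image_comp, hφ]), iInf_pos (by simp [φ]), iInf_pos (by simp [φ]),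
    eVariationOn.comp_eq_of_monotoneOn γ φ hφm, hφ]

lemma edist_le_idist (p q : Pt) : edist p q ≤ idist X p q :=
  le_idist fun γ _ _ h0 h1 => h0 ▸ h1 ▸ eVariationOn.edist_le γ (left_mem_Icc.2 zero_le_one)
    (right_mem_Icc.2 zero_le_one)

lemma idist_le_edist_of_segment_subset {p q : Pt} (h : segment ℝ p q ⊆ X) :
    idist X p q ≤ edist p q := by
  have hγ := lipschitzWith_lineMap (𝕜 := ℝ) p q
  have hvar : eVariationOn (id : ℝ → ℝ) (Icc 0 1) ≤ 1 := by simp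
  calc idist X p q = idist X (AffineMap.lineMap p q (0 : ℝ)) (AffineMap.lineMap p q (1 : ℝ)) := by
        simp
    _ ≤ eVariationOn (AffineMap.lineMap p q ∘ id) (Icc 0 1) :=
        idist_le_eVariationOn zero_le_one hγ.continuous.continuousOn
          (by rwa [← segment_eq_image_lineMap])
    _ ≤ nndist p q * eVariationOn (id : ℝ → ℝ) (Icc 0 1) :=
        (hγ.lipschitzOnWith (s := univ)).comp_eVariationOn_le (mapsTo_univ _ _)
    _ ≤ nndist p q * 1 := by gcongr
    _ = edist p q := by rw [mul_one, edist_nndist]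

lemma idist_triangle (a b c : Pt) : idist X a c ≤ idist X a b + idist X b c := by
  conv_rhs => simp only [idist, ENNReal.iInf_add, ENNReal.add_iInf]
  simp only [le_iInf_iff]
  intro γ₂ hγ₂ hX₂ hb₂ hc₂ γ₁ hγ₁ hX₁ ha₁ hb₁
  set g : ℝ → Pt := fun t => if t ≤ 1 then γ₁ t else γ₂ (t - 1)
  have hg₁ : EqOn g γ₁ (Icc 0 1) := fun t ht => if_pos ht.2
  have hg₂ : EqOn g (γ₂ ∘ (· - 1)) (Icc 1 2) := by
    intro t ht
    rcases ht.1.eq_or_lt with rfl | h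
    · simp [g, hb₁, hb₂]
    · exact if_neg h.not_ge
  have hshift : (· - 1) '' Icc (1 : ℝ) 2 = Icc 0 1 := by norm_num
  have hγ₂' : ContinuousOn (γ₂ ∘ (· - 1)) (Icc 1 2) :=
    hγ₂.comp (continuous_sub_right 1).continuousOn (hshift ▸ mapsTo_image _ _)
  have hgc : ContinuousOn g (Icc 0 2) := by
    rw [← Icc_union_Icc_eq_Icc zero_le_one one_le_two]
    exact (hγ₁.congr hg₁).union_of_isClosed (hγ₂'.congr hg₂) isClosed_Icc isClosed_Icc
  have hgX : g '' Icc 0 2 ⊆ X := by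
    rw [← Icc_union_Icc_eq_Icc zero_le_one one_le_two, image_union, hg₁.image_eq,
      hg₂.image_eq, image_comp, hshift]
    exact union_subset hX₁ hX₂
  have hvar : eVariationOn g (Icc 0 2) =
      eVariationOn γ₁ (Icc 0 1) + eVariationOn γ₂ (Icc 0 1) := by
    have := eVariationOn.Icc_add_Icc g zero_le_one one_le_two (mem_univ 1)
    rw [univ_inter, univ_inter, univ_inter] at this
    rw [← this, eVariationOn.eq_of_eqOn hg₁, eVariationOn.eq_of_eqOn hg₂,
      eVariationOn.comp_eq_of_monotoneOn _ _ (fun _ _ _ _ h => sub_le_sub_right h 1), hshift]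
  calc idist X a c = idist X (g 0) (g 2) := by norm_num [g, ha₁, hc₂]
    _ ≤ eVariationOn g (Icc 0 2) := idist_le_eVariationOn zero_le_two hgc hgX
    _ = _ := hvar

lemma idist_le_idiam {p q : Pt} (hp : p ∈ X) (hq : q ∈ X) : idist X p q ≤ idiam X :=
  le_iSup₂_of_le p hp (le_iSup₂_of_le (f := fun q _ => idist X p q) q hq le_rfl)

lemma edist_add_idist_le_idist_of_forall_path_mem {u p q : Pt}
    (h : ∀ γ : ℝ → Pt, ContinuousOn γ (Icc 0 1) → γ '' Icc 0 1 ⊆ X → γ 0 = u → γ 1 = q →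
      p ∈ γ '' Icc 0 1) :
    edist u p + idist X p q ≤ idist X u q := by
  refine le_idist fun γ hγ hX h0 h1 => ?_
  obtain ⟨t, ht, rfl⟩ := h γ hγ hX h0 h1
  have hsub : Icc t 1 ⊆ Icc 0 1 := Icc_subset_Icc_left ht.1
  have := eVariationOn.Icc_add_Icc γ ht.1 ht.2 (mem_univ t)
  rw [univ_inter, univ_inter, univ_inter] at this
  rw [← this, ← h0, ← h1]
  gcongr
  · exact eVariationOn.edist_le γ (left_mem_Icc.2 ht.1) (right_mem_Icc.2 ht.1)
  · exact idist_le_eVariationOn ht.2 (hγ.mono hsub) ((image_mono hsub).trans hX)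

end IntrinsicDistance

lemma ContinuousOn.image_Icc_inter_nonempty {E : Type*} [TopologicalSpace E] {A B : Set E}
    (hA : IsClosed A) (hB : IsClosed B) {γ : ℝ → E} (hγ : ContinuousOn γ (Icc 0 1))
    (hAB : γ '' Icc 0 1 ⊆ A ∪ B) (h0 : γ 0 ∉ B) (h1 : γ 1 ∉ A) :
    (γ '' Icc 0 1 ∩ (A ∩ B)).Nonempty := by
  by_contra hdisj
  rcases isPreconnected_iff_subset_of_disjoint_closed.1 (isPreconnected_Icc.image γ hγ) A B hA hB
    hAB (not_nonempty_iff_eq_empty.1 hdisj) with hsub | hsub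
  · exact h1 (hsub (mem_image_of_mem γ (right_mem_Icc.2 zero_le_one)))
  · exact h0 (hsub (mem_image_of_mem γ (left_mem_Icc.2 zero_le_one)))

/-- The pieces reachable with finite length from `x`, and the others, form two closed sets covering
the union without meeting. -/
lemma idist_lt_top_of_isPreconnected {ι : Type*} {s : Finset ι} {K : ι → Set Pt}
    (hclosed : ∀ i ∈ s, IsClosed (K i)) (hconvex : ∀ i ∈ s, Convex ℝ (K i))
    (hconn : IsPreconnected (⋃ i ∈ s, K i)) {x y : Pt} (hx : x ∈ ⋃ i ∈ s, K i)
    (hy : y ∈ ⋃ i ∈ s, K i) :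
    idist (⋃ i ∈ s, K i) x y < ⊤ := by
  set X := ⋃ i ∈ s, K i
  have hpiece : ∀ i ∈ s, ∀ z ∈ K i, ∀ w ∈ K i, idist X z w < ⊤ := fun i hi z hz w hw =>
    (idist_le_edist_of_segment_subset (((hconvex i hi).segment_subset hz hw).trans
      (subset_biUnion_of_mem hi))).trans_lt (edist_lt_top z w)
  set reached : ι → Prop := fun i => ∃ z ∈ K i, idist X x z < ⊤
  have hreached : ∀ i ∈ s, reached i → ∀ w ∈ K i, idist X x w < ⊤ := by
    rintro i hi ⟨z, hz, hxz⟩ w hw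
    exact (idist_triangle x z w).trans_lt (ENNReal.add_lt_top.2 ⟨hxz, hpiece i hi z hz w hw⟩)
  set A := ⋃ i ∈ s.filter reached, K i
  set B := ⋃ i ∈ s.filter (¬ reached ·), K i
  have hcover : X ⊆ A ∪ B := by
    intro z hz
    obtain ⟨i, hi, hzi⟩ := mem_iUnion₂.1 hz
    by_cases h : reached i
    · exact Or.inl (mem_biUnion (Finset.mem_filter.2 ⟨hi, h⟩) hzi)
    · exact Or.inr (mem_biUnion (Finset.mem_filter.2 ⟨hi, h⟩) hzi)
  have hdisj : X ∩ (A ∩ B) = ∅ := by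
    refine eq_empty_of_forall_notMem fun z ⟨_, hzA, hzB⟩ => ?_
    obtain ⟨i, hi, hzi⟩ := mem_iUnion₂.1 hzA
    obtain ⟨j, hj, hzj⟩ := mem_iUnion₂.1 hzB
    rw [Finset.mem_filter] at hi hj
    exact hj.2 ⟨z, hzj, hreached i hi.1 hi.2 z hzi⟩
  have hxA : x ∈ A := by
    obtain ⟨i, hi, hxi⟩ := mem_iUnion₂.1 hx
    exact mem_biUnion (Finset.mem_filter.2 ⟨hi, x, hxi, hpiece i hi x hxi x hxi⟩) hxi
  have hXA : X ⊆ A := by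
    refine (isPreconnected_iff_subset_of_disjoint_closed.1 hconn A B
      (isClosed_biUnion_finset fun i hi => hclosed i (Finset.mem_filter.1 hi).1)
      (isClosed_biUnion_finset fun i hi => hclosed i (Finset.mem_filter.1 hi).1)
      hcover hdisj).resolve_right fun hXB => ?_
    exact (eq_empty_iff_forall_notMem.1 hdisj) x ⟨hx, hxA, hXB hx⟩
  obtain ⟨i, hi, hyi⟩ := mem_iUnion₂.1 (hXA hy)
  rw [Finset.mem_filter] at hi
  exact hreached i hi.1 hi.2 y hyi

lemma segment_subset_union_of_mem {E : Type*} [AddCommGroup E] [Module ℝ E] {u v p : E}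
    (hp : p ∈ segment ℝ u v) : segment ℝ u v ⊆ segment ℝ u p ∪ segment ℝ p v := by
  intro x hx
  rw [mem_segment_iff_wbtw] at hp hx
  rw [mem_union, mem_segment_iff_wbtw, mem_segment_iff_wbtw]
  obtain ⟨s, hs, rfl⟩ := hp
  obtain ⟨t, ht, rfl⟩ := hx
  rcases wbtw_or_wbtw_smul_vadd_of_nonneg u (v -ᵥ u) ht.1 hs.1 with h | h
  · exact Or.inl (by simpa [AffineMap.lineMap_apply] using h)
  · exact Or.inr (Wbtw.trans_left_right ⟨t, ht, rfl⟩ (by simpa [AffineMap.lineMap_apply] using h))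

lemma isClosed_segment {E : Type*} [NormedAddCommGroup E] [NormedSpace ℝ E] (a b : E) :
    IsClosed (segment ℝ a b) :=
  convexHull_pair (𝕜 := ℝ) a b ▸ ((toFinite {a, b}).isCompact_convexHull (𝕜 := ℝ)).isClosed

namespace PlaneNetwork

variable {N : PlaneNetwork} {u v : Pt}

lemma segment_subset_locus {e : Pt × Pt} (he : e ∈ N.Edg) : segment ℝ e.1 e.2 ⊆ N.locus :=
  subset_biUnion_of_mem (u := fun e : Pt × Pt => segment ℝ e.1 e.2) he

lemma IsEdge.segment_subset_locus (he : N.IsEdge u v) : segment ℝ u v ⊆ N.locus := by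
  rcases he with he | he
  · exact PlaneNetwork.segment_subset_locus he
  · exact segment_symm ℝ v u ▸ PlaneNetwork.segment_subset_locus he

lemma IsEdge.ne (he : N.IsEdge u v) : u ≠ v := by
  rcases he with he | he
  · exact N.ends_ne _ he
  · exact (N.ends_ne _ he).symm

lemma Connected.idist_lt_top (hconn : N.Connected) {x y : Pt} (hx : x ∈ N.locus)
    (hy : y ∈ N.locus) : idist N.locus x y < ⊤ :=
  idist_lt_top_of_isPreconnected (fun e _ => isClosed_segment e.1 e.2)
    (fun e _ => convex_segment e.1 e.2) hconn.isConnected.isPreconnected hx hy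

lemma IsEdge.segment_inter_subset (he : N.IsEdge u v) {f : Pt × Pt} (hf : f ∈ N.Edg)
    (hf₁ : f.1 ≠ u) (hf₂ : f.2 ≠ u) : segment ℝ u v ∩ segment ℝ f.1 f.2 ⊆ {v} := by
  rintro x ⟨hxe, hxf⟩
  rcases he with he | he
  · have := N.plane _ he f hf (by rintro rfl; exact hf₁ rfl) ⟨hxe, hxf⟩
    rcases this with ⟨hx | hx, hx' | hx'⟩ <;> simp_all
  · have := N.plane _ he f hf (by rintro rfl; exact hf₂ rfl) ⟨segment_symm ℝ u v ▸ hxe, hxf⟩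
    rcases this with ⟨hx | hx, hx' | hx'⟩ <;> simp_all

lemma IsPendantVertex.segment_eq (hu : N.IsPendantVertex u) (he : N.IsEdge u v)
    {f : Pt × Pt} (hf : f ∈ N.Edg) (hfu : f.1 = u ∨ f.2 = u) :
    segment ℝ f.1 f.2 = segment ℝ u v := by
  have hfilter : f ∈ N.Edg.filter (fun e => e.1 = u ∨ e.2 = u) := Finset.mem_filter.2 ⟨hf, hfu⟩
  rcases he with he | he
  · rw [Finset.card_le_one.1 hu.2.le f hfilter _ (Finset.mem_filter.2 ⟨he, Or.inl rfl⟩)]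
  · rw [Finset.card_le_one.1 hu.2.le f hfilter _ (Finset.mem_filter.2 ⟨he, Or.inr rfl⟩),
      segment_symm]

/-- The locus is covered by the closed sets `[u, p]` and `[p, v] ∪` (edges avoiding `u`), which
meet only at `p`. -/
lemma IsPendantVertex.mem_image_of_path (hu : N.IsPendantVertex u) (he : N.IsEdge u v)
    {p q : Pt} (hpe : p ∈ segment ℝ u v) (hpv : p ≠ v) (hq : q ∉ segment ℝ u p) {γ : ℝ → Pt}
    (hγ : ContinuousOn γ (Icc 0 1)) (hX : γ '' Icc 0 1 ⊆ N.locus) (h0 : γ 0 = u)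
    (h1 : γ 1 = q) : p ∈ γ '' Icc 0 1 := by
  rcases eq_or_ne p u with rfl | hpu
  · exact ⟨0, left_mem_Icc.2 zero_le_one, h0⟩
  have hupv : Wbtw ℝ u p v := mem_segment_iff_wbtw.1 hpe
  set B := segment ℝ p v ∪ ⋃ f ∈ N.Edg.filter (fun f => f.1 ≠ u ∧ f.2 ≠ u), segment ℝ f.1 f.2
  have hB : IsClosed B :=
    (isClosed_segment p v).union (isClosed_biUnion_finset fun f _ => isClosed_segment f.1 f.2)
  have hcover : N.locus ⊆ segment ℝ u p ∪ B := by
    intro x hx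
    obtain ⟨f, hf, hxf⟩ := mem_iUnion₂.1 hx
    by_cases hfu : f.1 = u ∨ f.2 = u
    · rw [hu.segment_eq he hf hfu] at hxf
      rcases segment_subset_union_of_mem hpe hxf with hx | hx
      exacts [Or.inl hx, Or.inr (Or.inl hx)]
    · exact Or.inr (Or.inr (mem_biUnion (Finset.mem_filter.2 ⟨hf, not_or.1 hfu⟩) hxf))
  have huB : u ∉ B := by
    rintro (hup | hu')
    · exact hpu ((wbtw_swap_left_iff ℝ v).1 ⟨hupv, mem_segment_iff_wbtw.1 hup⟩).symm
    · obtain ⟨f, hf, huf⟩ := mem_iUnion₂.1 hu'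
      obtain ⟨hf, hf₁, hf₂⟩ := Finset.mem_filter.1 hf
      exact he.ne (he.segment_inter_subset hf hf₁ hf₂ ⟨left_mem_segment ℝ u v, huf⟩)
  have hinter : segment ℝ u p ∩ B ⊆ {p} := by
    rintro x ⟨hxu, hxp | hxf⟩
    · rw [mem_segment_iff_wbtw] at hxu hxp
      exact (wbtw_swap_left_iff ℝ v).1 ⟨hupv.trans_left_right hxu, hxp⟩
    · obtain ⟨f, hf, hxf⟩ := mem_iUnion₂.1 hxf
      obtain ⟨hf, hf₁, hf₂⟩ := Finset.mem_filter.1 hf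
      have hxv : x = v := he.segment_inter_subset hf hf₁ hf₂
        ⟨(convex_segment u v).segment_subset (left_mem_segment ℝ u v) hpe hxu, hxf⟩
      subst hxv
      exact absurd ((wbtw_swap_right_iff ℝ u).1 ⟨hupv, mem_segment_iff_wbtw.1 hxu⟩) hpv
  obtain ⟨x, hxγ, hxA, hxB⟩ := hγ.image_Icc_inter_nonempty (isClosed_segment u p) hB
    (hX.trans hcover) (h0 ▸ huB) (h1 ▸ hq)
  exact hinter ⟨hxA, hxB⟩ ▸ hxγ

end PlaneNetwork

/-- If `p`, `q` are diametral points and `p` lies on a pendant edge `uv` with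
`u` pendant, then `p = u` or `p = v`: no point in the relative interior of a pendant edge
belongs to a diametral pair. -/
theorem stmt8 (N : PlaneNetwork) (hconn : N.Connected) (p q u v : Pt)
    (hp : p ∈ N.locus) (hq : q ∈ N.locus)
    (hdiam : idist N.locus p q = idiam N.locus)
    (he : N.IsEdge u v) (hu : N.IsPendantVertex u)
    (hpe : p ∈ segment ℝ u v) :
    p = u ∨ p = v := by
  by_contra! ⟨hpu, hpv⟩
  have huv : segment ℝ u v ⊆ N.locus := he.segment_subset_locus
  have hdiam_uv : edist u v ≤ idiam N.locus :=
    (edist_le_idist u v).trans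
      (idist_le_idiam (huv (left_mem_segment ℝ u v)) (huv (right_mem_segment ℝ u v)))
  by_cases hqp : q ∈ segment ℝ u p
  · have hup : segment ℝ u p ⊆ segment ℝ u v :=
      (convex_segment u v).segment_subset (left_mem_segment ℝ u v) hpe
    have hpq : segment ℝ p q ⊆ N.locus :=
      ((convex_segment u p).segment_subset (right_mem_segment ℝ u p) hqp).trans (hup.trans huv)
    have hlt : edist p q < edist u v := by
      have h₁ := dist_add_dist_of_mem_segment hqp
      have h₂ := dist_add_dist_of_mem_segment hpe
      have h₃ := dist_pos.2 hpv
      rw [edist_dist, edist_dist, ENNReal.ofReal_lt_ofReal_iff_of_nonneg dist_nonneg, dist_comm p q]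
      linarith [dist_nonneg (x := u) (y := q)]
    exact ((idist_le_edist_of_segment_subset hpq).trans_lt (hlt.trans_le hdiam_uv)).ne hdiam
  · have hcut : edist u p + idist N.locus p q ≤ 0 + idist N.locus p q := calc
      _ ≤ idist N.locus u q := edist_add_idist_le_idist_of_forall_path_mem fun γ hγ hX h0 h1 =>
            hu.mem_image_of_path he hpe hpv hqp hγ hX h0 h1
      _ ≤ idiam N.locus := idist_le_idiam (huv (left_mem_segment ℝ u v)) hq
      _ = 0 + idist N.locus p q := by rw [zero_add, hdiam]
    exact hpu (edist_le_zero.1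
      (ENNReal.le_of_add_le_add_right (hconn.idist_lt_top hp hq).ne hcut)).symm
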